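/- Let A ∈ ℝ^{n×n}, C ∈ ℝ^{m×n}, let s ≥ 1 and k ≥ 0 be integers, and let κ > 0. Suppose that ‖O_s v‖ ≥ (1/κ)‖v‖ for every v ∈ ℝ^n, where O_s is the order-s observability matrix. Then there exist matrices α_1, …, α_s ∈ ℝ^{m×m} with ‖α_j‖_F ≤ κ · ‖C A^{k+s}‖_F for every j, such that C A^{k+s} = α_1 C A^{s−1} + α_2 C A^{s−2} + ⋯ + α_s C. -/

import Mathlib

/-!
Write `M = C A^{k+s}` and `O = O_s`. The lower bound `‖O v‖ ≥ ‖v‖ / κ` makes `O` injective, so the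
Gram matrix `Oᵀ O` is invertible. For each row `w` of `M` put `u = O v` with `Oᵀ O v = w`; then
`u O = w` and `‖u‖² = v ⬝ w ≤ ‖v‖ ‖w‖ ≤ κ ‖u‖ ‖w‖`, so `‖u‖ ≤ κ ‖w‖`. These rows form a
matrix `β` with `β O = M` and `‖β‖_F ≤ κ ‖M‖_F`; the `α_j` are the `m × m` blocks of `β`, in reverse
order, and each block has Frobenius norm at most `‖β‖_F`.
-/

/-- Euclidean norm of a real vector. -/
noncomputable def enormR {ι : Type*} [Fintype ι] (v : ι → ℝ) : ℝ :=
  Real.sqrt (∑ i, (v i) ^ 2)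

/-- Frobenius norm of a real matrix. -/
noncomputable def frobR {ι κ : Type*} [Fintype ι] [Fintype κ] (M : Matrix ι κ ℝ) : ℝ :=
  Real.sqrt (∑ i, ∑ j, (M i j) ^ 2)

/-- The order-`s` observability matrix `O_s = [C; CA; CA²; …; CA^{s−1}]` (row blocks indexed by
`Fin s`). -/
def obsMatR (n m s : ℕ) (A : Matrix (Fin n) (Fin n) ℝ)
    (C : Matrix (Fin m) (Fin n) ℝ) : Matrix (Fin s × Fin m) (Fin n) ℝ :=
  fun ir j => (C * A ^ (ir.1 : ℕ)) ir.2 j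

open Matrix Finset

section Norms

variable {ι κ : Type*} [Fintype ι] [Fintype κ]

theorem enormR_eq_norm (v : ι → ℝ) : enormR v = ‖WithLp.toLp 2 v‖ := by
  simp [enormR, EuclideanSpace.norm_eq]

theorem enormR_nonneg (v : ι → ℝ) : 0 ≤ enormR v :=
  Real.sqrt_nonneg _

theorem enormR_eq_zero {v : ι → ℝ} : enormR v = 0 ↔ v = 0 := by
  rw [enormR_eq_norm, norm_eq_zero, WithLp.toLp_eq_zero]

theorem enormR_sq (v : ι → ℝ) : enormR v ^ 2 = v ⬝ᵥ v := by
  rw [enormR, Real.sq_sqrt (by positivity)]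
  simp only [dotProduct, sq]

theorem dotProduct_le_enormR_mul_enormR (v w : ι → ℝ) : v ⬝ᵥ w ≤ enormR v * enormR w := by
  have := real_inner_le_norm (WithLp.toLp 2 v) (WithLp.toLp 2 w)
  rwa [EuclideanSpace.inner_eq_star_dotProduct, star_trivial, dotProduct_comm,
    ← enormR_eq_norm, ← enormR_eq_norm] at this

theorem frobR_eq_sqrt_sum_enormR_sq (M : Matrix ι κ ℝ) : frobR M = √(∑ i, enormR (M i) ^ 2) := by
  simp only [frobR, enormR, Real.sq_sqrt (sum_nonneg fun _ _ => sq_nonneg _)]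

theorem frobR_nonneg (M : Matrix ι κ ℝ) : 0 ≤ frobR M :=
  Real.sqrt_nonneg _

@[simp]
theorem frobR_zero : frobR (0 : Matrix ι κ ℝ) = 0 := by
  simp [frobR]

theorem frobR_le_mul_of_enormR_row_le {κ' : Type*} [Fintype κ'] {M : Matrix ι κ ℝ}
    {N : Matrix ι κ' ℝ} {c : ℝ} (hc : 0 ≤ c)
    (h : ∀ i, enormR (M i) ≤ c * enormR (N i)) : frobR M ≤ c * frobR N := by
  rw [frobR_eq_sqrt_sum_enormR_sq, frobR_eq_sqrt_sum_enormR_sq, ← Real.sqrt_sq hc,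
    ← Real.sqrt_mul (sq_nonneg c), mul_sum]
  gcongr with i
  rw [← mul_pow]
  exact pow_le_pow_left₀ (enormR_nonneg _) (h i) 2

theorem frobR_submatrix_le {κ' : Type*} [Fintype κ'] (M : Matrix ι κ ℝ) {f : κ' → κ}
    (hf : Function.Injective f) : frobR (M.submatrix id f) ≤ frobR M := by
  unfold frobR
  gcongr with i
  calc ∑ j, M i (f j) ^ 2 = ∑ j ∈ univ.map ⟨f, hf⟩, M i j ^ 2 :=
        (sum_map univ ⟨f, hf⟩ fun j => M i j ^ 2).symm
    _ ≤ ∑ j, M i j ^ 2 := sum_le_univ_sum_of_nonneg fun j => sq_nonneg (M i j)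

end Norms

section Gram

variable {p n : Type*} [Fintype p] [Fintype n] (O : Matrix p n ℝ)

theorem dotProduct_gram_mulVec (v : n → ℝ) : v ⬝ᵥ (Oᵀ * O) *ᵥ v = (O *ᵥ v) ⬝ᵥ (O *ᵥ v) := by
  rw [← mulVec_mulVec, dotProduct_mulVec, vecMul_transpose]

variable {O}

theorem mulVec_injective_of_enormR_le {κ : ℝ} (hκ : 0 < κ)
    (hO : ∀ v, (1 / κ) * enormR v ≤ enormR (O *ᵥ v)) : Function.Injective O.mulVec := by
  intro v w hvw
  have hle := hO (v - w)
  rw [mulVec_sub, hvw, sub_self, enormR_eq_zero.2 rfl, ← mul_zero (1 / κ)] at hle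
  have hzero := (le_of_mul_le_mul_left hle (one_div_pos.2 hκ)).antisymm (enormR_nonneg _)
  exact sub_eq_zero.1 (enormR_eq_zero.1 hzero)

theorem mulVec_gram_surjective (hO : Function.Injective O.mulVec) :
    Function.Surjective (Oᵀ * O).mulVec := by
  classical
  refine mulVec_surjective_iff_isUnit.2 (mulVec_injective_iff_isUnit.1 fun v w hvw => ?_)
  have hOvw : O *ᵥ (v - w) = 0 := by
    rw [← dotProduct_self_eq_zero, ← dotProduct_gram_mulVec, mulVec_sub, hvw, sub_self,
      dotProduct_zero]
  rw [mulVec_sub, sub_eq_zero] at hOvw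
  exact hO hOvw

variable {κ : ℝ}

theorem exists_vecMul_eq_enormR_le (hκ : 0 < κ)
    (hO : ∀ v, (1 / κ) * enormR v ≤ enormR (O *ᵥ v)) (w : n → ℝ) :
    ∃ u, u ᵥ* O = w ∧ enormR u ≤ κ * enormR w := by
  obtain ⟨v, hv⟩ := mulVec_gram_surjective (mulVec_injective_of_enormR_le hκ hO) w
  refine ⟨O *ᵥ v, by rw [← hv, ← mulVec_mulVec, mulVec_transpose], ?_⟩
  have hsq : enormR (O *ᵥ v) ^ 2 ≤ κ * enormR (O *ᵥ v) * enormR w := calc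
    enormR (O *ᵥ v) ^ 2 = v ⬝ᵥ w := by rw [enormR_sq, ← dotProduct_gram_mulVec, hv]
    _ ≤ enormR v * enormR w := dotProduct_le_enormR_mul_enormR v w
    _ ≤ κ * enormR (O *ᵥ v) * enormR w := by
      gcongr
      · exact enormR_nonneg w
      · have := mul_le_mul_of_nonneg_left (hO v) hκ.le
        rwa [← mul_assoc, mul_one_div_cancel hκ.ne', one_mul] at this
  nlinarith [enormR_nonneg (O *ᵥ v), mul_nonneg hκ.le (enormR_nonneg w)]

theorem exists_mul_eq_frobR_le {r : Type*} [Fintype r] (hκ : 0 < κ)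
    (hO : ∀ v, (1 / κ) * enormR v ≤ enormR (O *ᵥ v)) (M : Matrix r n ℝ) :
    ∃ β : Matrix r p ℝ, β * O = M ∧ frobR β ≤ κ * frobR M := by
  choose β hβO hβ using fun i => exists_vecMul_eq_enormR_le hκ hO (M i)
  exact ⟨β, ext fun i => congrFun (hβO i), frobR_le_mul_of_enormR_row_le hκ.le hβ⟩

end Gram

theorem mul_eq_sum_mul_blocks {R r σ m n : Type*} [Semiring R] [Fintype σ] [Fintype m]
    (β : Matrix r (σ × m) R) (O : Matrix (σ × m) n R) :
    β * O = ∑ i, β.submatrix id (Prod.mk i) * O.submatrix (Prod.mk i) id := by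
  ext a b
  simp only [mul_apply, Matrix.sum_apply, Fintype.sum_prod_type, submatrix_apply, id]

theorem sum_Icc_one_sub_eq_sum_range {M : Type*} [AddCommMonoid M] (f : ℕ → M) (s : ℕ) :
    ∑ j ∈ Icc 1 s, f (s - j) = ∑ i ∈ range s, f i := by
  rw [← Finset.Ico_add_one_right_eq_Icc, sum_Ico_reflect _ _ le_rfl, Nat.sub_self,
    Nat.add_sub_cancel, range_eq_Ico]

theorem obsMatR_submatrix_prodMk {n m s : ℕ} (A : Matrix (Fin n) (Fin n) ℝ)
    (C : Matrix (Fin m) (Fin n) ℝ) (i : Fin s) :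
    (obsMatR n m s A C).submatrix (Prod.mk i) id = C * A ^ (i : ℕ) :=
  rfl

theorem stabilizing_coefficients_exist_general (n m : ℕ)
    (A : Matrix (Fin n) (Fin n) ℝ) (C : Matrix (Fin m) (Fin n) ℝ)
    (s k : ℕ) (κ : ℝ) (hκ : 0 < κ)
    (hmin : ∀ v : Fin n → ℝ, (1 / κ) * enormR v ≤ enormR ((obsMatR n m s A C).mulVec v)) :
    ∃ α : ℕ → Matrix (Fin m) (Fin m) ℝ,
      (∀ j ∈ Finset.Icc 1 s, frobR (α j) ≤ κ * frobR (C * A ^ (k + s))) ∧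
      C * A ^ (k + s) = ∑ j ∈ Finset.Icc 1 s, α j * C * A ^ (s - j) := by
  obtain ⟨β, hβO, hβ⟩ := exists_mul_eq_frobR_le hκ hmin (C * A ^ (k + s))
  let block (i : ℕ) : Matrix (Fin m) (Fin m) ℝ :=
    if h : i < s then β.submatrix id (Prod.mk ⟨i, h⟩) else 0
  have block_le (i : ℕ) : frobR (block i) ≤ frobR β := by
    unfold block
    split_ifs
    · exact frobR_submatrix_le β (Prod.mk_right_injective _)
    · simpa using frobR_nonneg β
  refine ⟨fun j => block (s - j), fun j _ => (block_le _).trans hβ, ?_⟩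
  rw [sum_Icc_one_sub_eq_sum_range (fun i => block i * C * A ^ i), ← Fin.sum_univ_eq_sum_range,
    ← hβO, mul_eq_sum_mul_blocks]
  refine sum_congr rfl fun i _ => ?_
  simp only [block, dif_pos i.isLt, Fin.eta, obsMatR_submatrix_prodMk, Matrix.mul_assoc]

/-- If the smallest singular value of the order-`s` observability matrix `O_s`
is at least `1/κ` (i.e. `‖O_s v‖ ≥ (1/κ) ‖v‖` for all `v`), then for any `k ≥ 0` there exist
matrices `α₁, …, α_s ∈ ℝ^{m×m}` with `‖α_j‖_F ≤ κ ‖C A^{k+s}‖_F` for every `j`, such that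
`C A^{k+s} = α₁ C A^{s−1} + α₂ C A^{s−2} + ⋯ + α_s C`. -/
theorem stabilizing_coefficients_exist (n m : ℕ)
    (A : Matrix (Fin n) (Fin n) ℝ) (C : Matrix (Fin m) (Fin n) ℝ)
    (s k : ℕ) (hs : 1 ≤ s) (κ : ℝ) (hκ : 0 < κ)
    (hmin : ∀ v : Fin n → ℝ, (1 / κ) * enormR v ≤ enormR ((obsMatR n m s A C).mulVec v)) :
    ∃ α : ℕ → Matrix (Fin m) (Fin m) ℝ,
      (∀ j ∈ Finset.Icc 1 s, frobR (α j) ≤ κ * frobR (C * A ^ (k + s))) ∧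
      C * A ^ (k + s) = ∑ j ∈ Finset.Icc 1 s, α j * C * A ^ (s - j) :=
  stabilizing_coefficients_exist_general n m A C s k κ hκ hmin
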